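/- arXiv:1906.09398 — 3 statements merged into one kernel-verified Lean document; each statement's English description precedes it below -/
import Mathlib

section
/- The map φ : P_n × S_n → S_n × P_n given by ((p_1,...,p_m), w) ↦ (w, (w^{-1}(p_1),...,w^{-1}(p_m))) makes (P_n, S_n, φ) a matched pair of monoids; in particular, for all σ,τ ∈ S_n and p,q ∈ P_n: (στ)^{-1}-action is compatible, i.e., (στ)^{-1}(p) = τ^{-1}(σ^{-1}(p)) blockwise, and σ^{-1}(p * q) = σ^{-1}(p) * σ^{-1}(q) blockwise. -/
/-- `l` is an ordered set partition of `{0,...,n-1}`: a list of pairwise disjoint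
nonempty blocks whose union is everything. -/
def IsOSP (n : ℕ) (l : List (Finset (Fin n))) : Prop :=
  (∀ b ∈ l, b ≠ ∅) ∧ l.Pairwise Disjoint ∧ l.foldr (· ∪ ·) ∅ = Finset.univ

/-- Intersection product of ordered set partitions: list the nonempty
intersections `p_i ∩ q_j`, ordered first by `j` then by `i`. -/
def ospMul (n : ℕ) (p q : List (Finset (Fin n))) : List (Finset (Fin n)) :=
  (q.flatMap (fun b => p.map (fun a => a ∩ b))).filter (fun a => a ≠ ∅)

/-- Blockwise application of a permutation to an ordered set partition. -/
def permAct (n : ℕ) (σ : Equiv.Perm (Fin n)) (p : List (Finset (Fin n))) :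
    List (Finset (Fin n)) :=
  p.map (fun b => b.image σ)

/-- The PM-monoid product: `(σ,p)·(τ,q) = (στ, τ⁻¹(p) * q)`. -/
def pmMul (n : ℕ) (x y : Equiv.Perm (Fin n) × List (Finset (Fin n))) :
    Equiv.Perm (Fin n) × List (Finset (Fin n)) :=
  (x.1 * y.1, ospMul n (permAct n y.1⁻¹ x.2) y.2)

/-- The identity element `(id, ({1,...,n}))` of the PM-monoid. -/
def pmId (n : ℕ) : Equiv.Perm (Fin n) × List (Finset (Fin n)) :=
  ((1 : Equiv.Perm (Fin n)), [(Finset.univ : Finset (Fin n))])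

/-- `x* = (σ⁻¹, σ(p))`. -/
def pmStar (n : ℕ) (x : Equiv.Perm (Fin n) × List (Finset (Fin n))) :
    Equiv.Perm (Fin n) × List (Finset (Fin n)) :=
  (x.1⁻¹, permAct n x.1 x.2)

/-- Stirling numbers of the second kind. -/
def stirling2 : ℕ → ℕ → ℕ
  | 0, 0 => 1
  | 0, _ + 1 => 0
  | _ + 1, 0 => 0
  | n + 1, m + 1 => (m + 1) * stirling2 n (m + 1) + stirling2 n m

/-- Interval ordered set partition: blocks are consecutive intervals in increasing order. -/
def IsIntervalOSP (n : ℕ) (l : List (Finset (Fin n))) : Prop :=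
  IsOSP n l ∧ l.Pairwise (fun a b => ∀ x ∈ a, ∀ y ∈ b, x < y)

/-- `φ((p₁,...,p_m), w) = (w, (w⁻¹(p₁),...,w⁻¹(p_m)))` makes
`(P_n, S_n, φ)` a matched pair of monoids: the `S_n`-action on `P_n` by blockwise
preimage is a monoid action by monoid endomorphisms (and `P_n` acts trivially on `S_n`). -/
theorem stmt2 (n : ℕ) :
    (∀ (σ τ : Equiv.Perm (Fin n)) (p : List (Finset (Fin n))),
      permAct n ((σ * τ)⁻¹) p = permAct n τ⁻¹ (permAct n σ⁻¹ p)) ∧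
    (∀ (σ : Equiv.Perm (Fin n)) (p q : List (Finset (Fin n))), IsOSP n p → IsOSP n q →
      permAct n σ⁻¹ (ospMul n p q) = ospMul n (permAct n σ⁻¹ p) (permAct n σ⁻¹ q)) ∧
    (∀ p : List (Finset (Fin n)), permAct n ((1 : Equiv.Perm (Fin n))⁻¹) p = p) ∧
    (∀ σ : Equiv.Perm (Fin n),
      permAct n σ⁻¹ [(Finset.univ : Finset (Fin n))] = [Finset.univ]) := by
  refine ⟨?_, ?_, ?_, ?_⟩
  · intro σ τ p
    simp only [permAct, mul_inv_rev, List.map_map]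
    apply List.map_congr_left
    intro b _
    simp [Finset.image_image, Function.comp_def]
  · intro σ p q _ _
    set f : Finset (Fin n) → Finset (Fin n) := fun b => b.image (⇑σ⁻¹) with hf
    have himg : ∀ a b : Finset (Fin n), f (a ∩ b) = f a ∩ f b := fun a b =>
      Finset.image_inter a b (σ⁻¹).injective
    simp only [permAct, ospMul, ← hf]
    have h1 : (q.map f).flatMap (fun b => (p.map f).map (fun a => a ∩ b))
        = (q.flatMap (fun b => p.map (fun a => a ∩ b))).map f := by
      simp [List.map_flatMap, List.flatMap_map, List.map_map, Function.comp_def, himg]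
    rw [h1, List.filter_map]
    congr 1
    apply List.filter_congr
    intro a _
    simp [hf, Function.comp]
  · intro p
    simp [permAct]
  · intro σ
    simp [permAct]
end

section
/- The set S_n × P_n with multiplication (σ, p)·(τ, q) := (στ, τ^{-1}(p) * q), where τ^{-1}(p) denotes the blockwise preimage of the ordered partition p under τ and * is the intersection product of ordered set partitions, is a monoid with identity (id, ({1,...,n})). -/
/-- The identity element `(id, ({1,...,n}))` of the PM-monoid. -/

lemma mem_foldr_union {n : ℕ} (l : List (Finset (Fin n))) (x : Fin n) :
    x ∈ l.foldr (· ∪ ·) ∅ ↔ ∃ s ∈ l, x ∈ s := by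
  induction l with
  | nil => simp
  | cons a l ih => simp [ih]

lemma permAct_permAct {n : ℕ} (σ τ : Equiv.Perm (Fin n)) (p : List (Finset (Fin n))) :
    permAct n σ (permAct n τ p) = permAct n (σ * τ) p := by
  simp [permAct, List.map_map, Function.comp_def, Finset.image_image]

lemma permAct_ospMul {n : ℕ} (σ : Equiv.Perm (Fin n)) (p q : List (Finset (Fin n))) :
    permAct n σ (ospMul n p q) = ospMul n (permAct n σ p) (permAct n σ q) := by
  unfold permAct ospMul
  rw [List.flatMap_map]
  simp only [List.map_map, Function.comp_def, ← Finset.image_inter _ _ σ.injective]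
  have h1 : (fun b => List.map (fun a => Finset.image (⇑σ) (a ∩ b)) p)
      = fun b => List.map (Finset.image ⇑σ) (List.map (fun a => a ∩ b) p) := by
    funext b; rw [List.map_map]; rfl
  rw [h1, ← List.map_flatMap, List.filter_map]
  have h2 : ((fun a => decide (a ≠ ∅)) ∘ Finset.image ⇑σ)
      = (fun a : Finset (Fin n) => decide (a ≠ ∅)) := by
    funext s; simp [Finset.image_eq_empty]
  rw [h2]

lemma filter_map_inter {n : ℕ} (L : List (Finset (Fin n))) (c : Finset (Fin n)) :
    ((L.filter (fun a => a ≠ ∅)).map (· ∩ c)).filter (fun a => a ≠ ∅)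
      = (L.map (· ∩ c)).filter (fun a => a ≠ ∅) := by
  induction L with
  | nil => rfl
  | cons a L ih =>
    rcases eq_or_ne a ∅ with h | h
    · subst h
      rw [List.filter_cons_of_neg (by simp), List.map_cons,
        List.filter_cons_of_neg (by simp), ih]
    · rw [List.filter_cons_of_pos (by simpa), List.map_cons, List.map_cons]
      rcases eq_or_ne (a ∩ c) ∅ with h2 | h2
      · rw [List.filter_cons_of_neg (by simp [h2]), List.filter_cons_of_neg (by simp [h2]), ih]
      · rw [List.filter_cons_of_pos (by simpa), List.filter_cons_of_pos (by simpa), ih]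

lemma filter_flatMap_filter {n : ℕ} (M p : List (Finset (Fin n))) :
    (((M.filter (fun a => a ≠ ∅)).flatMap fun s => p.map (· ∩ s)).filter (fun a => a ≠ ∅))
      = ((M.flatMap fun s => p.map (· ∩ s)).filter (fun a => a ≠ ∅)) := by
  induction M with
  | nil => rfl
  | cons s M ih =>
    rcases eq_or_ne s ∅ with h | h
    · subst h
      rw [List.filter_cons_of_neg (by simp), List.flatMap_cons, List.filter_append, ih]
      have h2 : List.filter (fun a => decide (a ≠ ∅))
          (List.map (fun x => x ∩ (∅ : Finset (Fin n))) p) = [] := by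
        simp [List.filter_eq_nil_iff]
      rw [h2, List.nil_append]
    · rw [List.filter_cons_of_pos (by simpa), List.flatMap_cons, List.flatMap_cons,
        List.filter_append, List.filter_append, ih]

lemma ospMul_assoc {n : ℕ} (p q r : List (Finset (Fin n))) :
    ospMul n (ospMul n p q) r = ospMul n p (ospMul n q r) := by
  unfold ospMul
  rw [List.filter_flatMap]
  simp only [Function.comp_def, filter_map_inter]
  rw [← List.filter_flatMap, filter_flatMap_filter, List.flatMap_assoc]
  simp only [List.flatMap_map, List.map_flatMap, List.map_map, Function.comp_def,
    Finset.inter_assoc]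
lemma osp_mul {n : ℕ} {p q : List (Finset (Fin n))}
    (hp : IsOSP n p) (hq : IsOSP n q) : IsOSP n (ospMul n p q) := by
  obtain ⟨hp1, hp2, hp3⟩ := hp
  obtain ⟨hq1, hq2, hq3⟩ := hq
  refine ⟨?_, ?_, ?_⟩
  · intro b hb
    rw [ospMul, List.mem_filter] at hb
    simpa using hb.2
  · apply List.Pairwise.filter
    rw [List.pairwise_flatMap]
    constructor
    · intro b _
      rw [List.pairwise_map]
      exact hp2.imp fun h => h.mono Finset.inter_subset_left Finset.inter_subset_left
    · refine hq2.imp ?_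
      intro b b' h x hx y hy
      simp only [List.mem_map] at hx hy
      obtain ⟨a, _, rfl⟩ := hx
      obtain ⟨a', _, rfl⟩ := hy
      exact h.mono Finset.inter_subset_right Finset.inter_subset_right
  · apply Finset.eq_univ_iff_forall.2
    intro x
    obtain ⟨b, hb, hxb⟩ := (mem_foldr_union q x).1 (hq3 ▸ Finset.mem_univ x)
    obtain ⟨a, ha, hxa⟩ := (mem_foldr_union p x).1 (hp3 ▸ Finset.mem_univ x)
    apply (mem_foldr_union _ x).2
    refine ⟨a ∩ b, ?_, Finset.mem_inter.2 ⟨hxa, hxb⟩⟩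
    rw [ospMul, List.mem_filter]
    refine ⟨List.mem_flatMap.2 ⟨b, hb, List.mem_map.2 ⟨a, ha, rfl⟩⟩, ?_⟩
    simpa using Finset.ne_empty_of_mem (Finset.mem_inter.2 ⟨hxa, hxb⟩)

lemma osp_perm {n : ℕ} (σ : Equiv.Perm (Fin n)) {p : List (Finset (Fin n))}
    (hp : IsOSP n p) : IsOSP n (permAct n σ p) := by
  obtain ⟨hp1, hp2, hp3⟩ := hp
  refine ⟨?_, ?_, ?_⟩
  · intro b hb
    rw [permAct, List.mem_map] at hb
    obtain ⟨a, ha, rfl⟩ := hb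
    simpa [Finset.image_eq_empty] using hp1 a ha
  · rw [permAct, List.pairwise_map]
    exact hp2.imp fun h => (Finset.disjoint_image σ.injective).2 h
  · apply Finset.eq_univ_iff_forall.2
    intro x
    obtain ⟨a, ha, hxa⟩ := (mem_foldr_union p (σ.symm x)).1 (hp3 ▸ Finset.mem_univ _)
    apply (mem_foldr_union _ x).2
    exact ⟨a.image σ, List.mem_map.2 ⟨a, ha, rfl⟩,
      Finset.mem_image.2 ⟨σ.symm x, hxa, σ.apply_symm_apply x⟩⟩

lemma ospMul_id_left {n : ℕ} {q : List (Finset (Fin n))} (h1 : ∀ b ∈ q, b ≠ ∅) :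
    ospMul n [Finset.univ] q = q := by
  unfold ospMul
  simp only [List.map_cons, List.map_nil, Finset.univ_inter, List.flatMap_singleton']
  rw [List.filter_eq_self]
  intro a ha
  simpa using h1 a ha

lemma ospMul_id_right {n : ℕ} {p : List (Finset (Fin n))} (h1 : ∀ b ∈ p, b ≠ ∅) :
    ospMul n p [Finset.univ] = p := by
  unfold ospMul
  simp only [List.flatMap_cons, List.flatMap_nil, List.append_nil, Finset.inter_univ,
    List.map_id']
  rw [List.filter_eq_self]
  intro a ha
  simpa using h1 a ha

lemma permAct_univ {n : ℕ} (σ : Equiv.Perm (Fin n)) :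
    permAct n σ [Finset.univ] = [Finset.univ] := by
  simp [permAct, Finset.image_univ_equiv]

lemma permAct_one {n : ℕ} (p : List (Finset (Fin n))) : permAct n 1 p = p := by
  simp [permAct, Finset.image_id]

/-- `S_n × P_n` with `(σ,p)·(τ,q) = (στ, τ⁻¹(p) * q)` is a monoid
with identity `(id, ({1,...,n}))`. -/
theorem stmt3 (n : ℕ) (hn : 1 ≤ n) :
    (∀ x y : Equiv.Perm (Fin n) × List (Finset (Fin n)),
      IsOSP n x.2 → IsOSP n y.2 → IsOSP n (pmMul n x y).2) ∧
    (∀ x y z : Equiv.Perm (Fin n) × List (Finset (Fin n)),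
      IsOSP n x.2 → IsOSP n y.2 → IsOSP n z.2 →
      pmMul n (pmMul n x y) z = pmMul n x (pmMul n y z)) ∧
    (∀ x : Equiv.Perm (Fin n) × List (Finset (Fin n)), IsOSP n x.2 →
      pmMul n (pmId n) x = x) ∧
    (∀ x : Equiv.Perm (Fin n) × List (Finset (Fin n)), IsOSP n x.2 →
      pmMul n x (pmId n) = x) ∧
    IsOSP n (pmId n).2 := by
  refine ⟨?_, ?_, ?_, ?_, ?_⟩
  · intro x y hx hy
    exact osp_mul (osp_perm _ hx) hy
  · intro x y z _ _ _
    unfold pmMul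
    refine Prod.ext (mul_assoc _ _ _) ?_
    simp only
    rw [permAct_ospMul, permAct_permAct, ospMul_assoc, mul_inv_rev]
  · intro x hx
    unfold pmMul pmId
    refine Prod.ext (one_mul _) ?_
    simp only
    rw [permAct_univ, ospMul_id_left hx.1]
  · intro x hx
    unfold pmMul pmId
    refine Prod.ext (mul_one _) ?_
    simp only [inv_one]
    rw [permAct_one, ospMul_id_right hx.1]
  · haveI : Nonempty (Fin n) := ⟨⟨0, hn⟩⟩
    refine ⟨?_, by simp [pmId], by simp [pmId]⟩
    intro b hb
    simp only [pmId, List.mem_singleton] at hb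
    subst hb
    exact Finset.univ_nonempty.ne_empty
end

section
/- Every idempotent of ℛ_n is conjugate by a unit to a standard idempotent: E(ℛ_n) = ⋃_{w ∈ W} w Λ_n w^{-1}, where Λ_n is the set of idempotents (id, p) with p an ordered partition of [n] into consecutive intervals ({1,...,k_1},{k_1+1,...,k_2},...,{k_{m-1}+1,...,n}). -/
/-! Units form a group, so an idempotent `(σ, p)` has `σ = 1`; conversely `(1, p)` is
idempotent because `p * p = p` for an ordered set partition. Conjugating `(1, q)` by the unit
`σ` gives `(1, σ(q))`. Reading the blocks of `p` one after another enumerates `Fin n`; the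
permutation `σ` sending `i` to the `i`-th element of this enumeration makes `σ⁻¹(p)` a
partition into consecutive intervals, and `p = σ(σ⁻¹(p))`. -/

lemma mem_foldr_union_iff {α : Type*} [DecidableEq α] {l : List (Finset α)} {a : α} :
    a ∈ l.foldr (· ∪ ·) ∅ ↔ ∃ b ∈ l, a ∈ b := by
  induction l with
  | nil => simp
  | cons c l ih => simp [ih]

lemma foldr_union_map_image {α β : Type*} [DecidableEq α] [DecidableEq β] (f : α → β)
    (l : List (Finset α)) :
    (l.map (·.image f)).foldr (· ∪ ·) ∅ = (l.foldr (· ∪ ·) ∅).image f := by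
  induction l with
  | nil => simp
  | cons c l ih => simp [ih, Finset.image_union]

lemma exists_perm_ofFn_eq {n : ℕ} {l : List (Fin n)} (hnd : l.Nodup) (hmem : ∀ a, a ∈ l) :
    ∃ σ : Equiv.Perm (Fin n), List.ofFn σ = l := by
  let e := List.Nodup.getEquivOfForallMemList l hnd hmem
  have hlen : l.length = n := by simpa using Fintype.card_congr e
  refine ⟨(finCongr hlen).symm.trans e, ?_⟩
  conv_rhs => rw [← List.ofFn_get l, List.ofFn_congr hlen]
  rfl

lemma isOSP_permAct {n : ℕ} {p : List (Finset (Fin n))} (hp : IsOSP n p)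
    (σ : Equiv.Perm (Fin n)) : IsOSP n (permAct n σ p) := by
  obtain ⟨hne, hdisj, hcover⟩ := hp
  refine ⟨?_, ?_, ?_⟩
  · simp only [permAct, List.mem_map]
    rintro _ ⟨b, hb, rfl⟩
    simpa using hne b hb
  · exact List.pairwise_map.mpr (hdisj.imp (Finset.disjoint_image σ.injective).mpr)
  · rw [permAct, foldr_union_map_image, hcover]
    exact Finset.image_univ_of_surjective σ.surjective

lemma ospMul_univ_left {n : ℕ} {q : List (Finset (Fin n))} (hq : ∀ b ∈ q, b ≠ ∅) :
    ospMul n [Finset.univ] q = q := by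
  simpa [ospMul, List.filter_eq_self] using hq

lemma ospMul_univ_right {n : ℕ} {p : List (Finset (Fin n))} (hp : ∀ b ∈ p, b ≠ ∅) :
    ospMul n p [Finset.univ] = p := by
  simpa [ospMul, List.filter_eq_self] using hp

lemma filter_map_inter_eq_singleton {α : Type*} [DecidableEq α] {p : List (Finset α)}
    (hne : ∀ b ∈ p, b ≠ ∅) (hdisj : p.Pairwise Disjoint) {b : Finset α} (hb : b ∈ p) :
    (p.map (· ∩ b)).filter (· ≠ ∅) = [b] := by
  induction p with
  | nil => simp at hb
  | cons c p ih =>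
    obtain ⟨hc, hdisj⟩ := List.pairwise_cons.mp hdisj
    rcases List.mem_cons.mp hb with rfl | hb
    · have hrest : ∀ a ∈ p, a ∩ b = ∅ := fun a ha => by
        rw [Finset.inter_comm]
        exact Finset.disjoint_iff_inter_eq_empty.mp (hc a ha)
      simpa [hne b List.mem_cons_self] using hrest
    · have hcb : c ∩ b = ∅ := Finset.disjoint_iff_inter_eq_empty.mp (hc b hb)
      rw [List.map_cons, List.filter_cons, hcb, if_neg (by simp),
        ih (fun d hd => hne d (List.mem_cons_of_mem _ hd)) hdisj hb]

lemma IsOSP.ospMul_self {n : ℕ} {p : List (Finset (Fin n))} (hp : IsOSP n p) :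
    ospMul n p p = p := by
  rw [ospMul, List.filter_flatMap,
    List.flatMap_congr fun b hb => filter_map_inter_eq_singleton hp.1 hp.2.1 hb]
  simp

lemma IsOSP.exists_isIntervalOSP_permAct_eq {n : ℕ} {p : List (Finset (Fin n))}
    (hp : IsOSP n p) : ∃ σ q, IsIntervalOSP n q ∧ permAct n σ q = p := by
  have ⟨hne, hdisj, hcover⟩ := hp
  set l := (p.map Finset.toList).flatten
  have hnd : l.Nodup := by
    refine List.nodup_flatten.mpr ⟨by simp [Finset.nodup_toList], List.pairwise_map.mpr ?_⟩
    exact hdisj.imp fun hab a ha hb =>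
      Finset.disjoint_left.mp hab (by simpa using ha) (by simpa using hb)
  have hmem : ∀ a, a ∈ l := fun a => by
    simpa [l, List.mem_flatten] using mem_foldr_union_iff.mp (hcover ▸ Finset.mem_univ a)
  obtain ⟨σ, hσ⟩ := exists_perm_ofFn_eq hnd hmem
  refine ⟨σ, permAct n σ⁻¹ p, ⟨isOSP_permAct hp _, ?_⟩, ?_⟩
  · have hsorted : l.Pairwise (fun a b => σ⁻¹ a < σ⁻¹ b) := by
      rw [← hσ, List.pairwise_ofFn]
      simp
    simp only [permAct, List.pairwise_map]
    refine (List.pairwise_map.mp (List.pairwise_flatten.mp hsorted).2).imp ?_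
    rintro a b h _ hx _ hy
    obtain ⟨x, hx, rfl⟩ := Finset.mem_image.mp hx
    obtain ⟨y, hy, rfl⟩ := Finset.mem_image.mp hy
    exact h x (by simpa) y (by simpa)
  · rw [permAct_permAct, mul_inv_cancel, permAct_one]

lemma pmMul_self_eq_self_iff {n : ℕ} {x : Equiv.Perm (Fin n) × List (Finset (Fin n))}
    (hx : IsOSP n x.2) : pmMul n x x = x ↔ x.1 = 1 := by
  refine ⟨fun h => mul_eq_left.mp (congrArg Prod.fst h), fun h => ?_⟩
  obtain ⟨σ, p⟩ := x
  subst h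
  simp [pmMul, permAct_one, hx.ospMul_self]

lemma pmMul_conj {n : ℕ} (σ : Equiv.Perm (Fin n)) {q : List (Finset (Fin n))}
    (hq : IsOSP n q) :
    pmMul n (pmMul n (σ, [Finset.univ]) (1, q)) (σ⁻¹, [Finset.univ]) =
      (1, permAct n σ q) := by
  simp [pmMul, permAct_one, ospMul_univ_left hq.1, ospMul_univ_right (isOSP_permAct hq σ).1]

theorem stmt10_general (n : ℕ)
    (x : Equiv.Perm (Fin n) × List (Finset (Fin n))) (hx : IsOSP n x.2) :
    pmMul n x x = x ↔
      ∃ (σ : Equiv.Perm (Fin n)) (p : List (Finset (Fin n))), IsIntervalOSP n p ∧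
        x = pmMul n (pmMul n ((σ, [Finset.univ]) : Equiv.Perm (Fin n) × List (Finset (Fin n)))
          (1, p)) (σ⁻¹, [Finset.univ]) := by
  rw [pmMul_self_eq_self_iff hx]
  obtain ⟨τ, r⟩ := x
  constructor
  · rintro rfl
    obtain ⟨σ, p, hp, rfl⟩ := hx.exists_isIntervalOSP_permAct_eq
    exact ⟨σ, p, hp, (pmMul_conj σ hp.1).symm⟩
  · rintro ⟨σ, p, hp, h⟩
    rw [pmMul_conj σ hp.1] at h
    exact congrArg Prod.fst h

/-- every idempotent is a unit-conjugate of a standard interval-partition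
idempotent: `E(ℛ_n) = ⋃_{w ∈ W} w Λ_n w⁻¹`. -/
theorem stmt10 (n : ℕ) (hn : 1 ≤ n)
    (x : Equiv.Perm (Fin n) × List (Finset (Fin n))) (hx : IsOSP n x.2) :
    pmMul n x x = x ↔
      ∃ (σ : Equiv.Perm (Fin n)) (p : List (Finset (Fin n))), IsIntervalOSP n p ∧
        x = pmMul n (pmMul n ((σ, [Finset.univ]) : Equiv.Perm (Fin n) × List (Finset (Fin n)))
          (1, p)) (σ⁻¹, [Finset.univ]) :=
  stmt10_general n x hx
end
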